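/- arXiv:2003.05886 — 4 statements merged into one kernel-verified Lean document; each statement's English description precedes it below -/
import Mathlib

section
/- Suppose J̄ : ℝ^d × U → ℝ and J̲ : ℝ^d × U' → ℝ satisfy J̲(θ, u̲) ≤ J(θ) ≤ J̄(θ, ū) for all θ, ū, u̲, where J(θ) = inf_{ū} J̄(θ, ū). If the sequences (θ^{(t)}, ū^{(t)}, u̲^{(t)}) satisfy the relaxed generalized MM condition J̄(θ^{(t-1)}, ū^{(t)}) ≤ η J̲(θ^{(t-1)}, u̲^{(t)}) + (1−η) J̄(θ^{(t-2)}, ū^{(t-1)}) with η ∈ (0,1), θ^{(t)} minimizes J̄(·, ū^{(t)}), and J is bounded below, then the gap c_t := J̄(θ^{(t-2)}, ū^{(t-1)}) − J̲(θ^{(t-1)}, u̲^{(t)}) is nonnegative and tends to 0 as t → ∞. -/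
/-!
The majorant values `a t = J̄(θ^{(t)}, ū^{(t+1)})` decrease: the relaxed MM condition says
`a (t + 1) ≤ a t - η c t`, and the gap `c t` is nonnegative because
`J̲ ≤ J ≤ J̄(θ^{(t+1)}, ū^{(t+1)}) ≤ J̄(θ^{(t)}, ū^{(t+1)})` by the minimality of `θ^{(t+1)}`.
Since `J` is bounded below, `a` converges, so its successive differences, and with them
`η c t`, tend to `0`.
-/

open Filter Topology

lemma Antitone.tendsto_sub_succ_of_bddBelow {a : ℕ → ℝ} (ha : Antitone a)
    (hbdd : BddBelow (Set.range a)) :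
    Tendsto (fun t => a t - a (t + 1)) atTop (𝓝 0) := by
  have hconv : Tendsto a atTop (𝓝 (⨅ t, a t)) := tendsto_atTop_ciInf ha hbdd
  simpa using hconv.sub (hconv.comp (tendsto_add_atTop_nat 1))

lemma tendsto_zero_of_add_mul_le {a c : ℕ → ℝ} {η : ℝ} (hη : 0 < η) (hc : ∀ t, 0 ≤ c t)
    (hstep : ∀ t, a (t + 1) + η * c t ≤ a t) (hbdd : BddBelow (Set.range a)) :
    Tendsto c atTop (𝓝 0) := by
  have hanti : Antitone a :=
    antitone_nat_of_succ_le fun t => by nlinarith [hstep t, hc t]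
  have hupper : ∀ t, c t ≤ η⁻¹ * (a t - a (t + 1)) := fun t => by
    rw [← div_eq_inv_mul, le_div_iff₀' hη]
    linarith [hstep t]
  have hdiff := (hanti.tendsto_sub_succ_of_bddBelow hbdd).const_mul η⁻¹
  rw [mul_zero] at hdiff
  exact tendsto_of_tendsto_of_tendsto_of_le_of_le tendsto_const_nhds hdiff hc hupper

-- Indices are shifted by two against the paper: the gap at `t` below is the paper's `c_{t+2}`.
theorem stmt1_general {Θ U U' : Type*} (Jub : Θ → U → ℝ) (Jlb : Θ → U' → ℝ) (J : Θ → ℝ)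
    (hlow : ∀ θ u', Jlb θ u' ≤ J θ) (hup : ∀ θ u, J θ ≤ Jub θ u)
    (η : ℝ) (hη0 : 0 < η)
    (θ : ℕ → Θ) (ub : ℕ → U) (lb : ℕ → U')
    (hcond : ∀ t : ℕ, Jub (θ (t + 1)) (ub (t + 2)) ≤
      η * Jlb (θ (t + 1)) (lb (t + 2)) + (1 - η) * Jub (θ t) (ub (t + 1)))
    (hmin : ∀ t : ℕ, ∀ θ' : Θ, Jub (θ t) (ub t) ≤ Jub θ' (ub t))
    (hbdd : ∃ B, ∀ θ' : Θ, B ≤ J θ') :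
    (∀ t : ℕ, 0 ≤ Jub (θ t) (ub (t + 1)) - Jlb (θ (t + 1)) (lb (t + 2))) ∧
    Tendsto (fun t => Jub (θ t) (ub (t + 1)) - Jlb (θ (t + 1)) (lb (t + 2)))
      atTop (nhds 0) := by
  have hgap : ∀ t, 0 ≤ Jub (θ t) (ub (t + 1)) - Jlb (θ (t + 1)) (lb (t + 2)) := fun t => by
    linarith [hlow (θ (t + 1)) (lb (t + 2)), hup (θ (t + 1)) (ub (t + 1)), hmin (t + 1) (θ t)]
  obtain ⟨B, hB⟩ := hbdd
  refine ⟨hgap, tendsto_zero_of_add_mul_le (a := fun t => Jub (θ t) (ub (t + 1))) hη0 hgap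
    (fun t => by linarith [hcond t]) ⟨B, ?_⟩⟩
  rintro _ ⟨t, rfl⟩
  exact (hB _).trans (hup _ _)

/-- ReGeMM: the gap `c t = J̄(θ^{(t-2)}, ū^{(t-1)}) − J̲(θ^{(t-1)}, u̲^{(t)})`
(here reindexed with `t ↦ t + 2`) is nonnegative and tends to `0`. -/
theorem stmt1 {Θ U U' : Type*} (Jub : Θ → U → ℝ) (Jlb : Θ → U' → ℝ) (J : Θ → ℝ)
    (hlow : ∀ θ u', Jlb θ u' ≤ J θ) (hup : ∀ θ u, J θ ≤ Jub θ u)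
    (η : ℝ) (hη0 : 0 < η) (hη1 : η < 1)
    (θ : ℕ → Θ) (ub : ℕ → U) (lb : ℕ → U')
    (hcond : ∀ t : ℕ, Jub (θ (t + 1)) (ub (t + 2)) ≤
      η * Jlb (θ (t + 1)) (lb (t + 2)) + (1 - η) * Jub (θ t) (ub (t + 1)))
    (hmin : ∀ t : ℕ, ∀ θ' : Θ, Jub (θ t) (ub t) ≤ Jub θ' (ub t))
    (hbdd : ∃ B, ∀ θ' : Θ, B ≤ J θ') :
    (∀ t : ℕ, 0 ≤ Jub (θ t) (ub (t + 1)) - Jlb (θ (t + 1)) (lb (t + 2))) ∧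
    Tendsto (fun t => Jub (θ t) (ub (t + 1)) - Jlb (θ (t + 1)) (lb (t + 2)))
      atTop (nhds 0) :=
  stmt1_general Jub Jlb J hlow hup η hη0 θ ub lb hcond hmin hbdd
end

section
/- Suppose J̲(θ, u̲) ≤ J(θ) ≤ J̄(θ, ū) for all θ, ū, u̲, and θ ↦ J̄(θ, ū) has L-Lipschitz gradient for every ū. If (ū^{(t)}, u̲^{(t)}) satisfy the sufficient descent condition J̄(θ^{(t-1)}, ū^{(t)}) − J̲(θ^{(t-1)}, u̲^{(t)}) ≤ (ρ/(2L)) ‖∇_θ J̄(θ^{(t-1)}, ū^{(t)})‖² with ρ ∈ (0,1), and θ^{(t)} = θ^{(t-1)} − (1/L) ∇_θ J̄(θ^{(t-1)}, ū^{(t)}), then J(θ^{(t)}) ≤ J(θ^{(t-1)}) − ((1−ρ)/(2L)) ‖∇_θ J̄(θ^{(t-1)}, ū^{(t)})‖². -/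
/-!
A gradient step of size `1/L` on `J̄(·, ū)` lowers it by `‖∇J̄‖² / (2L)` (descent lemma, from the
`L`-Lipschitz gradient). Since `J ≤ J̄` at the new point while at the old point `J̄` exceeds
`J̲ ≤ J` by at most `ρ ‖∇J̄‖² / (2L)`, this decrease transfers to `J` up to the factor `1 - ρ`.
-/

open scoped RealInnerProductSpace NNReal

section Descent

variable {E : Type*} [NormedAddCommGroup E] [InnerProductSpace ℝ E] [CompleteSpace E]
  {f : E → ℝ}

lemma hasDerivAt_apply_add_smul {x v : E} {t : ℝ} (hf : DifferentiableAt ℝ f (x + t • v)) :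
    HasDerivAt (fun s : ℝ => f (x + s • v)) ⟪gradient f (x + t • v), v⟫ t := by
  have hline : HasDerivAt (fun s : ℝ => x + s • v) v t := by
    simpa using ((hasDerivAt_id t).smul_const v).const_add x
  exact (hf.hasGradientAt.hasFDerivAt.comp_hasDerivAt t hline).congr_deriv (by simp)

lemma inner_gradient_add_smul_sub_le {K : ℝ≥0} (hlip : LipschitzWith K (gradient f))
    (x v : E) {t : ℝ} (ht : 0 ≤ t) :
    ⟪gradient f (x + t • v) - gradient f x, v⟫ ≤ K * t * ‖v‖ ^ 2 := by
  have hdist : ‖gradient f (x + t • v) - gradient f x‖ ≤ K * (t * ‖v‖) := by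
    simpa [← dist_eq_norm, dist_eq_norm (x + t • v), norm_smul, abs_of_nonneg ht]
      using hlip.dist_le_mul (x + t • v) x
  calc ⟪gradient f (x + t • v) - gradient f x, v⟫
      ≤ ‖gradient f (x + t • v) - gradient f x‖ * ‖v‖ := real_inner_le_norm _ _
    _ ≤ K * (t * ‖v‖) * ‖v‖ := by gcongr
    _ = K * t * ‖v‖ ^ 2 := by ring

/-- The descent lemma of smooth optimization. -/
lemma le_add_inner_gradient_add_of_lipschitzWith_gradient {K : ℝ≥0} (hf : Differentiable ℝ f)
    (hlip : LipschitzWith K (gradient f)) (x y : E) :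
    f y ≤ f x + ⟪gradient f x, y - x⟫ + K / 2 * ‖y - x‖ ^ 2 := by
  set v := y - x
  set g : ℝ → ℝ := fun t => f (x + t • v) - t * ⟪gradient f x, v⟫ - K * t ^ 2 / 2 * ‖v‖ ^ 2
  have hg : ∀ t, HasDerivAt g
      (⟪gradient f (x + t • v) - gradient f x, v⟫ - K * t * ‖v‖ ^ 2) t := by
    intro t
    have hquad : HasDerivAt (fun s : ℝ => K * s ^ 2 / 2 * ‖v‖ ^ 2) (K * t * ‖v‖ ^ 2) t :=
      ((((hasDerivAt_pow 2 t).const_mul (K : ℝ)).div_const 2).mul_const (‖v‖ ^ 2)).congr_deriv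
        (by ring)
    exact (((hasDerivAt_apply_add_smul (hf _)).sub
      ((hasDerivAt_id t).mul_const ⟪gradient f x, v⟫)).sub hquad).congr_deriv
        (by rw [inner_sub_left, one_mul])
  have hanti : AntitoneOn g (Set.Ici 0) := by
    refine antitoneOn_of_hasDerivWithinAt_nonpos (convex_Ici 0)
      (fun t _ => (hg t).continuousAt.continuousWithinAt)
      (fun t _ => (hg t).hasDerivWithinAt) fun t ht => ?_
    rw [interior_Ici] at ht
    exact sub_nonpos.2 (inner_gradient_add_smul_sub_le hlip x v ht.le)
  have h := hanti Set.self_mem_Ici (Set.mem_Ici.2 zero_le_one) zero_le_one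
  simp only [g, v, one_smul, zero_smul, add_zero, add_sub_cancel] at h
  linarith

lemma apply_sub_one_div_smul_gradient_le {L : ℝ} (hL : 0 < L) (hf : Differentiable ℝ f)
    (hlip : LipschitzWith L.toNNReal (gradient f)) (x : E) :
    f (x - (1 / L) • gradient f x) ≤ f x - 1 / (2 * L) * ‖gradient f x‖ ^ 2 := by
  have h := le_add_inner_gradient_add_of_lipschitzWith_gradient hf hlip x
    (x - (1 / L) • gradient f x)
  rw [Real.coe_toNNReal L hL.le, sub_sub_cancel_left, inner_neg_right, real_inner_smul_right,
    real_inner_self_eq_norm_sq, norm_neg, norm_smul, Real.norm_of_nonneg (by positivity)] at h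
  convert h using 1
  field_simp
  ring

end Descent

theorem stmt4_general {d : ℕ} {U U' : Type*}
    (Jub : EuclideanSpace ℝ (Fin d) → U → ℝ)
    (Jlb : EuclideanSpace ℝ (Fin d) → U' → ℝ)
    (J : EuclideanSpace ℝ (Fin d) → ℝ)
    (hlow : ∀ θ u', Jlb θ u' ≤ J θ) (hup : ∀ θ u, J θ ≤ Jub θ u)
    (L : ℝ) (hL : 0 < L)
    (hdiff : ∀ u : U, Differentiable ℝ (fun θ => Jub θ u))
    (hlip : ∀ u : U, LipschitzWith (Real.toNNReal L) (gradient (fun θ => Jub θ u)))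
    (ρ : ℝ)
    (θ₀ θ₁ : EuclideanSpace ℝ (Fin d)) (u : U) (u' : U')
    (hcond : Jub θ₀ u - Jlb θ₀ u' ≤
      (ρ / (2 * L)) * ‖gradient (fun θ => Jub θ u) θ₀‖ ^ 2)
    (hstep : θ₁ = θ₀ - (1 / L) • gradient (fun θ => Jub θ u) θ₀) :
    J θ₁ ≤ J θ₀ - ((1 - ρ) / (2 * L)) * ‖gradient (fun θ => Jub θ u) θ₀‖ ^ 2 := by
  set G := gradient (fun θ => Jub θ u) θ₀
  have hdescent : Jub θ₁ u ≤ Jub θ₀ u - 1 / (2 * L) * ‖G‖ ^ 2 := by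
    rw [hstep]
    exact apply_sub_one_div_smul_gradient_le hL (hdiff u) (hlip u) θ₀
  calc J θ₁ ≤ Jub θ₁ u := hup θ₁ u
    _ ≤ Jlb θ₀ u' + ρ / (2 * L) * ‖G‖ ^ 2 - 1 / (2 * L) * ‖G‖ ^ 2 := by linarith
    _ ≤ J θ₀ + ρ / (2 * L) * ‖G‖ ^ 2 - 1 / (2 * L) * ‖G‖ ^ 2 := by gcongr; exact hlow θ₀ u'
    _ = J θ₀ - (1 - ρ) / (2 * L) * ‖G‖ ^ 2 := by ring

/-- SuDeMM one-step guarantee: if the duality gap at `θ₀` is at most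
`(ρ/(2L)) ‖∇_θ J̄(θ₀, ū)‖²` and `θ₁` is obtained by a gradient step of size `1/L`
on `J̄(·, ū)`, then `J(θ₁) ≤ J(θ₀) − ((1−ρ)/(2L)) ‖∇_θ J̄(θ₀, ū)‖²`. -/
theorem stmt4 {d : ℕ} {U U' : Type*}
    (Jub : EuclideanSpace ℝ (Fin d) → U → ℝ)
    (Jlb : EuclideanSpace ℝ (Fin d) → U' → ℝ)
    (J : EuclideanSpace ℝ (Fin d) → ℝ)
    (hlow : ∀ θ u', Jlb θ u' ≤ J θ) (hup : ∀ θ u, J θ ≤ Jub θ u)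
    (L : ℝ) (hL : 0 < L)
    (hdiff : ∀ u : U, Differentiable ℝ (fun θ => Jub θ u))
    (hlip : ∀ u : U, LipschitzWith (Real.toNNReal L) (gradient (fun θ => Jub θ u)))
    (ρ : ℝ) (hρ0 : 0 < ρ) (hρ1 : ρ < 1)
    (θ₀ θ₁ : EuclideanSpace ℝ (Fin d)) (u : U) (u' : U')
    (hcond : Jub θ₀ u - Jlb θ₀ u' ≤
      (ρ / (2 * L)) * ‖gradient (fun θ => Jub θ u) θ₀‖ ^ 2)
    (hstep : θ₁ = θ₀ - (1 / L) • gradient (fun θ => Jub θ u) θ₀) :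
    J θ₁ ≤ J θ₀ - ((1 - ρ) / (2 * L)) * ‖gradient (fun θ => Jub θ u) θ₀‖ ^ 2 :=
  stmt4_general Jub Jlb J hlow hup L hL hdiff hlip ρ θ₀ θ₁ u u' hcond hstep
end

section
/- Suppose θ ↦ J̄(θ; ū) has L-Lipschitz gradient for all ū, J̲(θ, u̲) ≤ J(θ) ≤ J̄(θ, ū) for all arguments, and the iterates satisfy θ^{(t-1)} = θ^{(t-2)} − (1/L) ∇J̄(θ^{(t-2)}; ū^{(t-1)}) together with the ReGeMM condition J̄(θ^{(t-1)}; ū^{(t)}) ≤ J̄(θ^{(t-2)}; ū^{(t-1)}) − η c_t where c_t = J̄(θ^{(t-2)}, ū^{(t-1)}) − J̲(θ^{(t-1)}, u̲^{(t)}) and η ∈ (0,1). Then c_t ≥ (1/(2L)) ‖∇J̄(θ^{(t-2)}; ū^{(t-1)})‖²; consequently, if c_t → 0 then ∇J̄(θ^{(t-2)}; ū^{(t-1)}) → 0. -/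
/-! By the descent lemma, the gradient step from `θ^{(t)}` lowers the majorizer `J̄(·; ū^{(t+1)})`
by at least `‖∇J̄‖² / (2L)`. The sandwich `J̲ ≤ J ≤ J̄` bounds `J̲(θ^{(t+1)}, u̲^{(t+2)})` by the
majorizer's new value, so the gap `c t` dominates that decrease. -/

open Filter Set
open scoped RealInnerProductSpace NNReal

section GradientDescent

variable {F : Type*} [NormedAddCommGroup F] [InnerProductSpace ℝ F] [CompleteSpace F]
  {f : F → ℝ}

theorem hasDerivAt_comp_add_smul (hf : Differentiable ℝ f) (x v : F) (s : ℝ) :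
    HasDerivAt (fun s : ℝ => f (x + s • v)) ⟪gradient f (x + s • v), v⟫ s := by
  have hline : HasDerivAt (fun s : ℝ => x + s • v) v s := by
    simpa using ((hasDerivAt_id s).smul_const v).const_add x
  have := (hf _).hasFDerivAt.comp_hasDerivAt s hline
  rwa [(hf _).hasGradientAt.fderiv_apply] at this

theorem descent_lemma (hf : Differentiable ℝ f) {L : ℝ≥0} (hlip : LipschitzWith L (gradient f))
    (x y : F) : f y ≤ f x + ⟪gradient f x, y - x⟫ + L / 2 * ‖y - x‖ ^ 2 := by
  set v := y - x
  -- `φ` is antitone on `[0, ∞)` because `∇f` grows at most linearly along the segment.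
  let φ : ℝ → ℝ := fun s => f (x + s • v) - s * ⟪gradient f x, v⟫ - L / 2 * s ^ 2 * ‖v‖ ^ 2
  have hφ : ∀ s, HasDerivAt φ (⟪gradient f (x + s • v) - gradient f x, v⟫ - L * s * ‖v‖ ^ 2) s := by
    intro s
    refine (((hasDerivAt_comp_add_smul hf x v s).sub
      ((hasDerivAt_id s).mul_const ⟪gradient f x, v⟫)).sub
      (((hasDerivAt_pow 2 s).const_mul (L / 2 : ℝ)).mul_const (‖v‖ ^ 2))).congr_deriv ?_
    rw [inner_sub_left]; push_cast; ring
  have hφ_nonpos : ∀ s ∈ interior (Ici (0 : ℝ)),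
      ⟪gradient f (x + s • v) - gradient f x, v⟫ - L * s * ‖v‖ ^ 2 ≤ 0 := by
    intro s hs
    rw [interior_Ici, mem_Ioi] at hs
    have hgrad : ‖gradient f (x + s • v) - gradient f x‖ ≤ L * (s * ‖v‖) := by
      simpa [← dist_eq_norm, norm_smul, abs_of_pos hs] using hlip.dist_le_mul (x + s • v) x
    rw [sub_nonpos]
    calc ⟪gradient f (x + s • v) - gradient f x, v⟫
        ≤ ‖gradient f (x + s • v) - gradient f x‖ * ‖v‖ := real_inner_le_norm _ _
      _ ≤ L * (s * ‖v‖) * ‖v‖ := by gcongr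
      _ = L * s * ‖v‖ ^ 2 := by ring
  have hanti : AntitoneOn φ (Ici 0) :=
    antitoneOn_of_hasDerivWithinAt_nonpos (convex_Ici 0)
      (fun s _ => (hφ s).continuousAt.continuousWithinAt)
      (fun s _ => (hφ s).hasDerivWithinAt) hφ_nonpos
  have := hanti self_mem_Ici (mem_Ici.2 zero_le_one) zero_le_one
  simp only [φ, one_smul, zero_smul, add_zero, v, add_sub_cancel] at this
  linarith

theorem image_sub_smul_gradient_le (hf : Differentiable ℝ f) {L : ℝ} (hL : 0 < L)
    (hlip : LipschitzWith L.toNNReal (gradient f)) (x : F) :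
    f (x - (1 / L) • gradient f x) ≤ f x - 1 / (2 * L) * ‖gradient f x‖ ^ 2 := by
  have h := descent_lemma hf hlip x (x - (1 / L) • gradient f x)
  rw [Real.coe_toNNReal L hL.le, sub_sub_cancel_left, inner_neg_right, norm_neg,
    real_inner_smul_right, real_inner_self_eq_norm_sq, norm_smul,
    Real.norm_of_nonneg (by positivity)] at h
  calc f (x - (1 / L) • gradient f x)
      ≤ f x + -(1 / L * ‖gradient f x‖ ^ 2) + L / 2 * (1 / L * ‖gradient f x‖) ^ 2 := h
    _ = f x - 1 / (2 * L) * ‖gradient f x‖ ^ 2 := by field_simp; ring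

end GradientDescent

theorem tendsto_zero_of_sq_norm_le {E : Type*} [SeminormedAddCommGroup E] {ι : Type*}
    {l : Filter ι} {g : ι → E} {c : ι → ℝ} {K : ℝ} (hK : 0 < K)
    (hgc : ∀ i, K * ‖g i‖ ^ 2 ≤ c i) (hc : Tendsto c l (nhds 0)) : Tendsto g l (nhds 0) := by
  have hsq : Tendsto (fun i => ‖g i‖ ^ 2) l (nhds 0) :=
    squeeze_zero (fun i => by positivity) (fun i => (le_div_iff₀' hK).2 (hgc i))
      (by simpa using hc.div_const K)
  rw [tendsto_zero_iff_norm_tendsto_zero]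
  simpa [Real.sqrt_sq (norm_nonneg _)] using hsq.sqrt

theorem stmt7_general {d : ℕ} {U U' : Type*}
    (Jub : EuclideanSpace ℝ (Fin d) → U → ℝ)
    (Jlb : EuclideanSpace ℝ (Fin d) → U' → ℝ)
    (J : EuclideanSpace ℝ (Fin d) → ℝ)
    (hlow : ∀ θ u', Jlb θ u' ≤ J θ) (hup : ∀ θ u, J θ ≤ Jub θ u)
    (L : ℝ) (hL : 0 < L)
    (hdiff : ∀ u : U, Differentiable ℝ (fun θ => Jub θ u))
    (hlip : ∀ u : U, LipschitzWith (Real.toNNReal L) (gradient (fun θ => Jub θ u)))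
    (θ : ℕ → EuclideanSpace ℝ (Fin d)) (ub : ℕ → U) (lb : ℕ → U') (c : ℕ → ℝ)
    (hc : ∀ t, c t = Jub (θ t) (ub (t + 1)) - Jlb (θ (t + 1)) (lb (t + 2)))
    (hstep : ∀ t, θ (t + 1) = θ t - (1 / L) • gradient (fun x => Jub x (ub (t + 1))) (θ t)) :
    (∀ t, (1 / (2 * L)) * ‖gradient (fun x => Jub x (ub (t + 1))) (θ t)‖ ^ 2 ≤ c t) ∧
    (Tendsto c atTop (nhds 0) →
      Tendsto (fun t => gradient (fun x => Jub x (ub (t + 1))) (θ t)) atTop (nhds 0)) := by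
  have hgap : ∀ t, 1 / (2 * L) * ‖gradient (fun x => Jub x (ub (t + 1))) (θ t)‖ ^ 2 ≤ c t := by
    intro t
    have hdescent := image_sub_smul_gradient_le (hdiff (ub (t + 1))) hL (hlip _) (θ t)
    rw [← hstep t] at hdescent
    have hsandwich := (hlow (θ (t + 1)) (lb (t + 2))).trans (hup _ (ub (t + 1)))
    rw [hc t]
    linarith
  exact ⟨hgap, tendsto_zero_of_sq_norm_le (by positivity) hgap⟩

/-- ReGeMM with gradient steps (reindexed with `t-2 ↦ t`): the gap
`c t = J̄(θ^{(t)}, ū^{(t+1)}) − J̲(θ^{(t+1)}, u̲^{(t+2)})` dominates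
`(1/(2L)) ‖∇J̄(θ^{(t)}; ū^{(t+1)})‖²`; hence `c t → 0` forces the gradients to 0. -/
theorem stmt7 {d : ℕ} {U U' : Type*}
    (Jub : EuclideanSpace ℝ (Fin d) → U → ℝ)
    (Jlb : EuclideanSpace ℝ (Fin d) → U' → ℝ)
    (J : EuclideanSpace ℝ (Fin d) → ℝ)
    (hlow : ∀ θ u', Jlb θ u' ≤ J θ) (hup : ∀ θ u, J θ ≤ Jub θ u)
    (L : ℝ) (hL : 0 < L) (η : ℝ) (hη0 : 0 < η) (hη1 : η < 1)
    (hdiff : ∀ u : U, Differentiable ℝ (fun θ => Jub θ u))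
    (hlip : ∀ u : U, LipschitzWith (Real.toNNReal L) (gradient (fun θ => Jub θ u)))
    (θ : ℕ → EuclideanSpace ℝ (Fin d)) (ub : ℕ → U) (lb : ℕ → U') (c : ℕ → ℝ)
    (hc : ∀ t, c t = Jub (θ t) (ub (t + 1)) - Jlb (θ (t + 1)) (lb (t + 2)))
    (hstep : ∀ t, θ (t + 1) = θ t - (1 / L) • gradient (fun x => Jub x (ub (t + 1))) (θ t))
    (hcond : ∀ t, Jub (θ (t + 1)) (ub (t + 2)) ≤ Jub (θ t) (ub (t + 1)) - η * c t) :
    (∀ t, (1 / (2 * L)) * ‖gradient (fun x => Jub x (ub (t + 1))) (θ t)‖ ^ 2 ≤ c t) ∧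
    (Tendsto c atTop (nhds 0) →
      Tendsto (fun t => gradient (fun x => Jub x (ub (t + 1))) (θ t)) atTop (nhds 0)) :=
  stmt7_general Jub Jlb J hlow hup L hL hdiff hlip θ ub lb c hc hstep
end

section
/- In the ReGeMM-with-gradient-step setting, if instead of a gradient step each update satisfies the sufficient descent condition J̄(θ^{(t)}; ū^{(t)}) ≤ J̄(θ^{(t-1)}; ū^{(t)}) − (κ/(2L)) ‖∇J̄(θ^{(t-1)}; ū^{(t)})‖² for some κ ∈ (0,1), then c_t ≥ (κ/(2L)) ‖∇J̄(θ^{(t-2)}; ū^{(t-1)})‖² for all t, and c_t → 0 implies the gradients tend to zero. -/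
open Filter Topology

theorem le_upper_sub_lower_of_descent {X U U' : Type*} {Jub : X → U → ℝ} {Jlb : X → U' → ℝ}
    {J : X → ℝ} (hlow : ∀ x u', Jlb x u' ≤ J x) (hup : ∀ x u, J x ≤ Jub x u)
    {x y : X} {u : U} (u' : U') {δ : ℝ} (hdesc : Jub y u ≤ Jub x u - δ) :
    δ ≤ Jub x u - Jlb y u' := by
  linarith [hlow y u', hup y u]

theorem tendsto_zero_of_mul_norm_sq_le {ι E : Type*} [SeminormedAddCommGroup E] {l : Filter ι}
    {a : ℝ} (ha : 0 < a) {g : ι → E} {c : ι → ℝ} (hle : ∀ i, a * ‖g i‖ ^ 2 ≤ c i)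
    (hc : Tendsto c l (𝓝 0)) : Tendsto g l (𝓝 0) := by
  have hbound : ∀ i, ‖g i‖ ≤ √(c i / a) := fun i =>
    Real.le_sqrt_of_sq_le <| (le_div_iff₀ ha).2 <| by linarith [hle i]
  have hsqrt : Tendsto (fun i => √(c i / a)) l (𝓝 0) := by
    simpa using (hc.div_const a).sqrt
  exact squeeze_zero_norm hbound hsqrt

theorem stmt8_general {d : ℕ} {U U' : Type*}
    (Jub : EuclideanSpace ℝ (Fin d) → U → ℝ)
    (Jlb : EuclideanSpace ℝ (Fin d) → U' → ℝ)
    (J : EuclideanSpace ℝ (Fin d) → ℝ)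
    (hlow : ∀ θ u', Jlb θ u' ≤ J θ) (hup : ∀ θ u, J θ ≤ Jub θ u)
    (L : ℝ) (hL : 0 < L)
    (κ : ℝ) (hκ0 : 0 < κ)
    (θ : ℕ → EuclideanSpace ℝ (Fin d)) (ub : ℕ → U) (lb : ℕ → U') (c : ℕ → ℝ)
    (hc : ∀ t, c t = Jub (θ t) (ub (t + 1)) - Jlb (θ (t + 1)) (lb (t + 2)))
    (hdesc : ∀ t, Jub (θ (t + 1)) (ub (t + 1)) ≤ Jub (θ t) (ub (t + 1)) -
      (κ / (2 * L)) * ‖gradient (fun x => Jub x (ub (t + 1))) (θ t)‖ ^ 2) :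
    (∀ t, (κ / (2 * L)) * ‖gradient (fun x => Jub x (ub (t + 1))) (θ t)‖ ^ 2 ≤ c t) ∧
    (Tendsto c atTop (nhds 0) →
      Tendsto (fun t => gradient (fun x => Jub x (ub (t + 1))) (θ t)) atTop (nhds 0)) := by
  have hgap : ∀ t, (κ / (2 * L)) * ‖gradient (fun x => Jub x (ub (t + 1))) (θ t)‖ ^ 2 ≤ c t :=
    fun t => hc t ▸ le_upper_sub_lower_of_descent hlow hup (lb (t + 2)) (hdesc t)
  exact ⟨hgap, tendsto_zero_of_mul_norm_sq_le (by positivity) hgap⟩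

/-- ReGeMM with a sufficient-descent update instead of an exact gradient step
(reindexed with `t-1 ↦ t`): the gap `c t` dominates
`(κ/(2L)) ‖∇J̄(θ^{(t)}; ū^{(t+1)})‖²`, so `c t → 0` forces the gradients to 0. -/
theorem stmt8 {d : ℕ} {U U' : Type*}
    (Jub : EuclideanSpace ℝ (Fin d) → U → ℝ)
    (Jlb : EuclideanSpace ℝ (Fin d) → U' → ℝ)
    (J : EuclideanSpace ℝ (Fin d) → ℝ)
    (hlow : ∀ θ u', Jlb θ u' ≤ J θ) (hup : ∀ θ u, J θ ≤ Jub θ u)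
    (L : ℝ) (hL : 0 < L) (η : ℝ) (hη0 : 0 < η) (hη1 : η < 1)
    (κ : ℝ) (hκ0 : 0 < κ) (hκ1 : κ < 1)
    (θ : ℕ → EuclideanSpace ℝ (Fin d)) (ub : ℕ → U) (lb : ℕ → U') (c : ℕ → ℝ)
    (hc : ∀ t, c t = Jub (θ t) (ub (t + 1)) - Jlb (θ (t + 1)) (lb (t + 2)))
    (hdesc : ∀ t, Jub (θ (t + 1)) (ub (t + 1)) ≤ Jub (θ t) (ub (t + 1)) -
      (κ / (2 * L)) * ‖gradient (fun x => Jub x (ub (t + 1))) (θ t)‖ ^ 2)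
    (hcond : ∀ t, Jub (θ (t + 1)) (ub (t + 2)) ≤ Jub (θ t) (ub (t + 1)) - η * c t) :
    (∀ t, (κ / (2 * L)) * ‖gradient (fun x => Jub x (ub (t + 1))) (θ t)‖ ^ 2 ≤ c t) ∧
    (Tendsto c atTop (nhds 0) →
      Tendsto (fun t => gradient (fun x => Jub x (ub (t + 1))) (θ t)) atTop (nhds 0)) :=
  stmt8_general Jub Jlb J hlow hup L hL κ hκ0 θ ub lb c hc hdesc
end
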